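/- For every integer p ≥ 2 and every subset I of {e_i − e_j, e_i + e_j : 1 ≤ i < j ≤ p} (the long positive roots of B_p, which as vectors coincide with the short positive roots of C_p), the following are equivalent: (1) I is a combinatorial abelian ideal with respect to (Δ(B_p), Δ⁺(B_p)); (2) both of the following hold: (a) for all μ, ν ∈ I one has μ + ν ∉ Δ(C_p), and (b) for all γ ∈ I and ν ∈ Δ⁺(C_p) such that γ + ν is a short root of C_p, one has γ + ν ∈ I. -/
import Mathlib


/-- The `i`-th standard basis vector of `ℝ^p`. -/
noncomputable def e {p : ℕ} (i : Fin p) : Fin p → ℝ := fun j => if j = i then 1 else 0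

/-- The positive roots of the root system `B_p`. -/
def PosB (p : ℕ) : Set (Fin p → ℝ) :=
  {v | (∃ i j : Fin p, i < j ∧ (v = e i - e j ∨ v = e i + e j)) ∨ (∃ i : Fin p, v = e i)}

/-- All roots of `B_p`. -/
def DeltaB (p : ℕ) : Set (Fin p → ℝ) := PosB p ∪ {v | -v ∈ PosB p}

/-- The long positive roots of `B_p`. -/
def LongPosB (p : ℕ) : Set (Fin p → ℝ) :=
  {v | ∃ i j : Fin p, i < j ∧ (v = e i - e j ∨ v = e i + e j)}

/-- The positive roots of the root system `C_p`. -/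
def PosC (p : ℕ) : Set (Fin p → ℝ) :=
  {v | (∃ i j : Fin p, i < j ∧ (v = e i - e j ∨ v = e i + e j)) ∨
       (∃ i : Fin p, v = (2 : ℝ) • e i)}

/-- All roots of `C_p`. -/
def DeltaC (p : ℕ) : Set (Fin p → ℝ) := PosC p ∪ {v | -v ∈ PosC p}

/-- The short roots of `C_p` (all of them, positive and negative): `±e_i ± e_j`, `i < j`. -/
def ShortC (p : ℕ) : Set (Fin p → ℝ) :=
  {v | ∃ i j : Fin p, i < j ∧
        (v = e i - e j ∨ v = e i + e j ∨ v = -(e i - e j) ∨ v = -(e i + e j))}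

/-- `I` is a combinatorial abelian ideal with respect to the root system `Δ`
with positive system `Δ⁺`. -/
def IsAbelianIdeal {V : Type*} [Add V] (Δ Δp : Set V) (I : Set V) : Prop :=
  I ⊆ Δp ∧ (∀ μ ∈ I, ∀ ν ∈ I, μ + ν ∉ Δ) ∧
    (∀ γ ∈ I, ∀ ν ∈ Δp, γ + ν ∈ Δ → γ + ν ∈ I)
section Aux

variable {p : ℕ}

lemma e_self (i : Fin p) : e i i = 1 := if_pos rfl
lemma e_ne {i j : Fin p} (h : j ≠ i) : e i j = 0 := if_neg h
lemma e_nonneg (i j : Fin p) : 0 ≤ e i j := by unfold e; split_ifs <;> norm_num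
lemma e_le_one (i j : Fin p) : e i j ≤ 1 := by unfold e; split_ifs <;> norm_num
lemma e_eq_one_iff {i j : Fin p} : e i j = 1 ↔ j = i := by
  unfold e; split_ifs with h <;> simp [h]
lemma e_cases (i j : Fin p) : e i j = 0 ∨ e i j = 1 := by
  unfold e; split_ifs <;> simp

noncomputable def Ssum (v : Fin p → ℝ) : ℝ := ∑ j, v j

lemma Ssum_e (i : Fin p) : Ssum (e i) = 1 := by
  simp [Ssum, e, Finset.sum_ite_eq']
lemma Ssum_add (u v : Fin p → ℝ) : Ssum (u + v) = Ssum u + Ssum v := by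
  simp [Ssum, Finset.sum_add_distrib]
lemma Ssum_sub (u v : Fin p → ℝ) : Ssum (u - v) = Ssum u - Ssum v := by
  simp [Ssum, Finset.sum_sub_distrib]
lemma Ssum_neg (v : Fin p → ℝ) : Ssum (-v) = -Ssum v := by
  simp [Ssum]
lemma Ssum_smul (c : ℝ) (v : Fin p → ℝ) : Ssum (c • v) = c * Ssum v := by
  simp [Ssum, Finset.mul_sum]

lemma Ssum_long {v : Fin p → ℝ} (h : v ∈ LongPosB p) : Ssum v = 0 ∨ Ssum v = 2 := by
  obtain ⟨i, j, hij, h | h⟩ := h <;> subst h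
  · left; rw [Ssum_sub, Ssum_e, Ssum_e]; ring
  · right; rw [Ssum_add, Ssum_e, Ssum_e]; ring

lemma Ssum_short {v : Fin p → ℝ} (h : v ∈ ShortC p) :
    Ssum v = 0 ∨ Ssum v = 2 ∨ Ssum v = -2 := by
  obtain ⟨i, j, hij, h | h | h | h⟩ := h <;> subst h
  · left; rw [Ssum_sub, Ssum_e, Ssum_e]; ring
  · right; left; rw [Ssum_add, Ssum_e, Ssum_e]; ring
  · left; rw [Ssum_neg, Ssum_sub, Ssum_e, Ssum_e]; ring
  · right; right; rw [Ssum_neg, Ssum_add, Ssum_e, Ssum_e]; ring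

lemma e_not_long (a : Fin p) : e a ∉ LongPosB p := by
  rintro ⟨i, j, hij, h | h⟩
  · have h1 := congrFun h j
    rw [Pi.sub_apply, e_ne hij.ne', e_self] at h1
    have := e_nonneg a j; linarith
  · have h1 := congrFun h i
    have h2 := congrFun h j
    rw [Pi.add_apply, e_self, e_ne hij.ne] at h1
    rw [Pi.add_apply, e_ne hij.ne', e_self] at h2
    have hi : i = a := e_eq_one_iff.mp (by linarith)
    have hj : j = a := e_eq_one_iff.mp (by linarith)
    exact hij.ne (hi.trans hj.symm)

lemma e_add_le_one {i j : Fin p} (h : i ≠ j) (x : Fin p) : e i x + e j x ≤ 1 := by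
  rcases eq_or_ne x i with h1 | h1
  · subst h1
    rw [e_self, e_ne h]
    norm_num
  · rw [e_ne h1]
    linarith [e_le_one j x]

lemma short_bound {v : Fin p → ℝ} (h : v ∈ ShortC p) (x : Fin p) :
    -1 ≤ v x ∧ v x ≤ 1 := by
  obtain ⟨i, j, hij, h | h | h | h⟩ := h <;> subst h <;>
    simp only [Pi.sub_apply, Pi.add_apply, Pi.neg_apply] <;>
    constructor <;>
    linarith [e_nonneg i x, e_nonneg j x, e_le_one i x, e_le_one j x,
      e_add_le_one hij.ne x]

lemma shortC_subset_deltaB {v : Fin p → ℝ} (h : v ∈ ShortC p) : v ∈ DeltaB p := by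
  obtain ⟨i, j, hij, h | h | h | h⟩ := h
  · exact Or.inl (Or.inl ⟨i, j, hij, Or.inl h⟩)
  · exact Or.inl (Or.inl ⟨i, j, hij, Or.inr h⟩)
  · exact Or.inr (Or.inl ⟨i, j, hij, Or.inl (by rw [h, neg_neg])⟩)
  · exact Or.inr (Or.inl ⟨i, j, hij, Or.inr (by rw [h, neg_neg])⟩)

lemma shortC_subset_deltaC {v : Fin p → ℝ} (h : v ∈ ShortC p) : v ∈ DeltaC p := by
  obtain ⟨i, j, hij, h | h | h | h⟩ := h
  · exact Or.inl (Or.inl ⟨i, j, hij, Or.inl h⟩)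
  · exact Or.inl (Or.inl ⟨i, j, hij, Or.inr h⟩)
  · exact Or.inr (Or.inl ⟨i, j, hij, Or.inl (by rw [h, neg_neg])⟩)
  · exact Or.inr (Or.inl ⟨i, j, hij, Or.inr (by rw [h, neg_neg])⟩)

lemma deltaB_cases {v : Fin p → ℝ} (h : v ∈ DeltaB p) :
    v ∈ ShortC p ∨ ∃ a, v = e a ∨ v = -e a := by
  rcases h with (⟨i, j, hij, h⟩ | ⟨a, h⟩) | (⟨i, j, hij, h⟩ | ⟨a, h⟩)
  · rcases h with h | h
    · exact Or.inl ⟨i, j, hij, Or.inl h⟩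
    · exact Or.inl ⟨i, j, hij, Or.inr (Or.inl h)⟩
  · exact Or.inr ⟨a, Or.inl h⟩
  · rcases h with h | h
    · exact Or.inl ⟨i, j, hij, Or.inr (Or.inr (Or.inl (by rw [← h, neg_neg])))⟩
    · exact Or.inl ⟨i, j, hij, Or.inr (Or.inr (Or.inr (by rw [← h, neg_neg])))⟩
  · exact Or.inr ⟨a, Or.inr (by rw [← h, neg_neg])⟩

lemma deltaC_cases {v : Fin p → ℝ} (h : v ∈ DeltaC p) :
    v ∈ ShortC p ∨ ∃ a, v = (2:ℝ) • e a ∨ v = -((2:ℝ) • e a) := by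
  rcases h with (⟨i, j, hij, h⟩ | ⟨a, h⟩) | (⟨i, j, hij, h⟩ | ⟨a, h⟩)
  · rcases h with h | h
    · exact Or.inl ⟨i, j, hij, Or.inl h⟩
    · exact Or.inl ⟨i, j, hij, Or.inr (Or.inl h)⟩
  · exact Or.inr ⟨a, Or.inl h⟩
  · rcases h with h | h
    · exact Or.inl ⟨i, j, hij, Or.inr (Or.inr (Or.inl (by rw [← h, neg_neg])))⟩
    · exact Or.inl ⟨i, j, hij, Or.inr (Or.inr (Or.inr (by rw [← h, neg_neg])))⟩
  · exact Or.inr ⟨a, Or.inr (by rw [← h, neg_neg])⟩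

lemma posC_cases {v : Fin p → ℝ} (h : v ∈ PosC p) :
    v ∈ LongPosB p ∨ ∃ k, v = (2:ℝ) • e k := h

lemma posB_cases {v : Fin p → ℝ} (h : v ∈ PosB p) :
    v ∈ LongPosB p ∨ ∃ k, v = e k := h

lemma eadd_mem_short {a k : Fin p} (h : a ≠ k) : e a + e k ∈ ShortC p := by
  rcases h.lt_or_gt with h' | h'
  · exact ⟨a, k, h', Or.inr (Or.inl rfl)⟩
  · exact ⟨k, a, h', Or.inr (Or.inl (add_comm _ _))⟩

/-- Classification: sum of two long positive roots equal to `2 e a`. -/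
lemma sum_eq_two_e {μ ν : Fin p → ℝ} (hμ : μ ∈ LongPosB p) (hν : ν ∈ LongPosB p)
    {a : Fin p} (h : μ + ν = (2:ℝ) • e a) :
    ∃ b, b ≠ a ∧ (μ = e a - e b ∨ ν = e a - e b) := by
  have key : ∀ i j k l : Fin p, i < j → k < l →
      (e i - e j) + (e k + e l) = (2:ℝ) • e a → i = a := by
    intro i j k l hij hkl heq
    have h1 := congrFun heq i
    simp only [Pi.add_apply, Pi.sub_apply, Pi.smul_apply, smul_eq_mul] at h1
    rw [e_self, e_ne hij.ne] at h1
    rcases e_cases a i with h0 | h0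
    · rw [h0] at h1
      have := e_nonneg k i; have := e_nonneg l i; linarith
    · exact e_eq_one_iff.mp h0
  obtain ⟨i, j, hij, hμ'⟩ := hμ
  obtain ⟨k, l, hkl, hν'⟩ := hν
  rcases hμ' with h1 | h1 <;> rcases hν' with h2 | h2 <;> subst h1 <;> subst h2
  · exfalso
    have := congrArg Ssum h
    rw [Ssum_add, Ssum_sub, Ssum_sub, Ssum_smul, Ssum_e, Ssum_e, Ssum_e, Ssum_e, Ssum_e] at this
    linarith
  · have hia : i = a := key i j k l hij hkl h
    exact ⟨j, by rw [← hia]; exact hij.ne', Or.inl (by rw [hia])⟩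
  · have hka : k = a := key k l i j hkl hij (by rw [← h]; ring)
    exact ⟨l, by rw [← hka]; exact hkl.ne', Or.inr (by rw [hka])⟩
  · exfalso
    have := congrArg Ssum h
    rw [Ssum_add, Ssum_add, Ssum_add, Ssum_smul, Ssum_e, Ssum_e, Ssum_e, Ssum_e, Ssum_e] at this
    linarith

/-- Classification: long positive root plus `2 e k` landing in `ShortC`. -/
lemma long_add_two_e {γ : Fin p → ℝ} (hγ : γ ∈ LongPosB p) {k : Fin p}
    (h : γ + (2:ℝ) • e k ∈ ShortC p) : ∃ i, i ≠ k ∧ γ = e i - e k := by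
  obtain ⟨i, j, hij, hγ'⟩ := hγ
  have hb := short_bound h k
  rcases hγ' with h1 | h1 <;> subst h1
  · have hkj : k = j := by
      by_contra hkj
      have hb2 := hb.2
      have h0 : e j k = 0 := e_ne hkj
      have h1 : e k k = (1:ℝ) := e_self k
      simp only [Pi.add_apply, Pi.sub_apply, Pi.smul_apply, smul_eq_mul, h0, h1] at hb2
      have := e_nonneg i k
      linarith
    subst hkj
    exact ⟨i, hij.ne, rfl⟩
  · exfalso
    have hb2 := hb.2
    have h1 : e k k = (1:ℝ) := e_self k
    simp only [Pi.add_apply, Pi.smul_apply, smul_eq_mul, h1] at hb2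
    have := e_nonneg i k; have := e_nonneg j k
    linarith

/-- Classification: long positive root plus `e k` equal to `e a`. -/
lemma long_add_e_eq_e {γ : Fin p → ℝ} (hγ : γ ∈ LongPosB p) {k a : Fin p}
    (h : γ + e k = e a) : a ≠ k ∧ γ = e a - e k := by
  obtain ⟨i, j, hij, hγ'⟩ := hγ
  rcases hγ' with h1 | h1 <;> subst h1
  · have hj := congrFun h j
    simp only [Pi.add_apply, Pi.sub_apply] at hj
    rw [e_ne hij.ne', e_self] at hj
    have hjk : j = k := by
      rcases e_cases k j with h0 | h0
      · rw [h0] at hj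
        have := e_nonneg a j; linarith
      · exact e_eq_one_iff.mp h0
    rw [← hjk] at h
    have heq : e i = e a := by rw [← h]; abel
    have hia : i = a := by
      have h1 := congrFun heq i
      rw [e_self] at h1
      exact e_eq_one_iff.mp h1.symm
    refine ⟨?_, ?_⟩
    · rw [← hia, ← hjk]; exact hij.ne
    · rw [← hia, ← hjk]
  · exfalso
    have h1 := congrFun h i
    have h2 := congrFun h j
    simp only [Pi.add_apply] at h1 h2
    rw [e_self, e_ne hij.ne] at h1
    rw [e_ne hij.ne', e_self] at h2
    have hia : i = a := by
      have := e_nonneg k i; have := e_le_one a i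
      rcases e_cases a i with h0 | h0
      · rw [h0] at h1; linarith
      · exact e_eq_one_iff.mp h0
    have hja : j = a := by
      have := e_nonneg k j; have := e_le_one a j
      rcases e_cases a j with h0 | h0
      · rw [h0] at h2; linarith
      · exact e_eq_one_iff.mp h0
    exact hij.ne (hia.trans hja.symm)

end Aux
section Main

variable {p : ℕ}

lemma ring1 (a b : Fin p) : (e a - e b) + e b = e a := by abel

lemma ring2 (a k : Fin p) : (e a - e k) + (2:ℝ) • e k = e a + e k := by
  rw [two_smul]; abel

lemma ring3 (a k : Fin p) : (e a - e k) + (e a + e k) = (2:ℝ) • e a := by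
  rw [two_smul]; abel

end Main

/-- A subset of the long positive roots of `B_p` is a combinatorial abelian ideal of `B_p`
iff, viewed inside the dual root system `C_p`, it is a `b`-stable commutative subset of the
short roots of `C_p`. -/
theorem long_abelian_ideal_Bp_iff_dual (p : ℕ) (hp : 2 ≤ p)
    (I : Set (Fin p → ℝ)) (hI : I ⊆ LongPosB p) :
    IsAbelianIdeal (DeltaB p) (PosB p) I ↔
      ((∀ μ ∈ I, ∀ ν ∈ I, μ + ν ∉ DeltaC p) ∧
       (∀ γ ∈ I, ∀ ν ∈ PosC p, γ + ν ∈ ShortC p → γ + ν ∈ I)) := by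
  constructor
  · rintro ⟨hsub, hab, hid⟩
    constructor
    · intro μ hμ ν hν hsum
      rcases deltaC_cases hsum with hs | ⟨a, h | h⟩
      · exact hab μ hμ ν hν (shortC_subset_deltaB hs)
      · obtain ⟨b, hba, hρ⟩ := sum_eq_two_e (hI hμ) (hI hν) h
        have hbI : e a - e b ∈ I := by
          rcases hρ with h' | h'
          · rw [← h']; exact hμ
          · rw [← h']; exact hν
        have hebP : e b ∈ PosB p := Or.inr ⟨b, rfl⟩
        have haI : e a ∈ I := by
          have := hid _ hbI (e b) hebP
            (by rw [ring1]; exact Or.inl (Or.inr ⟨a, rfl⟩))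
          rwa [ring1] at this
        exact e_not_long a (hI haI)
      · have h1 := Ssum_long (hI hμ)
        have h2 := Ssum_long (hI hν)
        have h3 := congrArg Ssum h
        rw [Ssum_add, Ssum_neg, Ssum_smul, Ssum_e] at h3
        rcases h1 with h1 | h1 <;> rcases h2 with h2 | h2 <;> linarith
    · intro γ hγ ν hν hshort
      rcases posC_cases hν with hl | ⟨k, rfl⟩
      · exact hid γ hγ ν (Or.inl hl) (shortC_subset_deltaB hshort)
      · obtain ⟨i, hik, hγ'⟩ := long_add_two_e (hI hγ) hshort
        exfalso
        rw [hγ'] at hγ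
        have heiI : e i ∈ I := by
          have := hid _ hγ (e k) (Or.inr ⟨k, rfl⟩)
            (by rw [ring1]; exact Or.inl (Or.inr ⟨i, rfl⟩))
          rwa [ring1] at this
        exact e_not_long i (hI heiI)
  · rintro ⟨hab, hid⟩
    refine ⟨fun v hv => Or.inl (hI hv), ?_, ?_⟩
    · intro μ hμ ν hν hsum
      rcases deltaB_cases hsum with hs | ⟨a, h | h⟩
      · exact hab μ hμ ν hν (shortC_subset_deltaC hs)
      · have h1 := Ssum_long (hI hμ)
        have h2 := Ssum_long (hI hν)
        have h3 := congrArg Ssum h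
        rw [Ssum_add, Ssum_e] at h3
        rcases h1 with h1 | h1 <;> rcases h2 with h2 | h2 <;> linarith
      · have h1 := Ssum_long (hI hμ)
        have h2 := Ssum_long (hI hν)
        have h3 := congrArg Ssum h
        rw [Ssum_add, Ssum_neg, Ssum_e] at h3
        rcases h1 with h1 | h1 <;> rcases h2 with h2 | h2 <;> linarith
    · intro γ hγ ν hν hsum
      rcases posB_cases hν with hl | ⟨k, rfl⟩
      · rcases deltaB_cases hsum with hs | ⟨a, h | h⟩
        · exact hid γ hγ ν (Or.inl hl) hs
        · exfalso
          have h1 := Ssum_long (hI hγ)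
          have h2 := Ssum_long hl
          have h3 := congrArg Ssum h
          rw [Ssum_add, Ssum_e] at h3
          rcases h1 with h1 | h1 <;> rcases h2 with h2 | h2 <;> linarith
        · exfalso
          have h1 := Ssum_long (hI hγ)
          have h2 := Ssum_long hl
          have h3 := congrArg Ssum h
          rw [Ssum_add, Ssum_neg, Ssum_e] at h3
          rcases h1 with h1 | h1 <;> rcases h2 with h2 | h2 <;> linarith
      · exfalso
        rcases deltaB_cases hsum with hs | ⟨a, h | h⟩
        · have h1 := Ssum_long (hI hγ)
          have h2 := Ssum_short hs
          have h3 : Ssum (γ + e k) = Ssum γ + 1 := by rw [Ssum_add, Ssum_e]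
          rcases h1 with h1 | h1 <;>
            rcases h2 with h2 | h2 | h2 <;> rw [h2] at h3 <;> linarith
        · obtain ⟨hak, hγ'⟩ := long_add_e_eq_e (hI hγ) h
          rw [hγ'] at hγ
          have h2k : (2:ℝ) • e k ∈ PosC p := Or.inr ⟨k, rfl⟩
          have hmem : (e a - e k) + (2:ℝ) • e k ∈ ShortC p := by
            rw [ring2]; exact eadd_mem_short hak
          have hIk := hid _ hγ _ h2k hmem
          rw [ring2] at hIk
          exact hab _ hγ _ hIk
            (by rw [ring3]; exact Or.inl (Or.inr ⟨a, rfl⟩))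
        · have h1 := Ssum_long (hI hγ)
          have h3 := congrArg Ssum h
          rw [Ssum_add, Ssum_e, Ssum_neg, Ssum_e] at h3
          rcases h1 with h1 | h1 <;> linarith
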